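/- arXiv:1807.05810 — 8 statements merged into one kernel-verified Lean document; each statement's English description precedes it below -/
import Mathlib

section
/- Let T_j : X ⇉ X be union α_j-averaged nonexpansive operators for j = 1,...,m. Then the pointwise union T(x) := ∪_{j} T_j(x) is union α-averaged nonexpansive with α := max_j α_j. -/
open Filter Topology

/-- Outer semicontinuity of an index-valued map `φ : X ⇉ I` (finite discrete `I`). -/
def OSCIdx {X I : Type*} [TopologicalSpace X] (φ : X → Set I) : Prop :=
  ∀ (x : X) (i : I) (xn : ℕ → X),
    Tendsto xn atTop (nhds x) → (∀ n, i ∈ φ (xn n)) → i ∈ φ x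

/-- A single-valued operator `S : X → X` is `α`-averaged nonexpansive (`α ∈ (0,1)`). -/
def Averaged {X : Type*} [NormedAddCommGroup X] [InnerProductSpace ℝ X]
    (α : ℝ) (S : X → X) : Prop :=
  0 < α ∧ α < 1 ∧
    ∀ x y : X, ‖S x - S y‖ ^ 2 + (1 - α) / α * ‖(x - S x) - (y - S y)‖ ^ 2 ≤ ‖x - y‖ ^ 2

/-- A set-valued operator `T : X ⇉ X` is union `α`-averaged nonexpansive if
`T(x) = {T_i(x) : i ∈ φ(x)}` for a finite index set `I`, a collection of
`α`-averaged nonexpansive operators `{T_i}` and an osc nonempty-valued selector `φ`. -/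
def UnionAveraged {X : Type*} [NormedAddCommGroup X] [InnerProductSpace ℝ X]
    (α : ℝ) (T : X → Set X) : Prop :=
  ∃ (I : Type) (_ : Fintype I) (Ts : I → X → X) (φ : X → Set I),
    (∀ i, Averaged α (Ts i)) ∧ OSCIdx φ ∧ (∀ x, (φ x).Nonempty) ∧
    ∀ x, T x = {y | ∃ i ∈ φ x, y = Ts i x}

lemma averaged_mono {X : Type*} [NormedAddCommGroup X] [InnerProductSpace ℝ X]
    {a b : ℝ} {S : X → X} (hab : a ≤ b) (hb : b < 1) (h : Averaged a S) :
    Averaged b S := by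
  obtain ⟨ha0, ha1, hineq⟩ := h
  refine ⟨lt_of_lt_of_le ha0 hab, hb, fun x y => ?_⟩
  have hb0 : 0 < b := lt_of_lt_of_le ha0 hab
  have hcoef : (1 - b) / b ≤ (1 - a) / a := by
    rw [div_le_div_iff₀ hb0 ha0]; nlinarith
  have hsq : (0:ℝ) ≤ ‖(x - S x) - (y - S y)‖ ^ 2 := by positivity
  nlinarith [hineq x y]

/-- A pointwise union of union `α_j`-averaged nonexpansive operators is union
`α`-averaged nonexpansive with `α := max_j α_j`. -/
theorem stmt_3 {X J : Type*}
    [NormedAddCommGroup X] [InnerProductSpace ℝ X] [FiniteDimensional ℝ X]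
    [Fintype J] [Nonempty J]
    (α : J → ℝ) (T : J → X → Set X)
    (h : ∀ j, UnionAveraged (α j) (T j)) :
    UnionAveraged (Finset.univ.sup' Finset.univ_nonempty α) (fun x => ⋃ j, T j x) := by
  classical
  choose I instI Ts φ hav hosc hne hT using h
  letI : ∀ j, Fintype (I j) := instI
  set b := Finset.univ.sup' Finset.univ_nonempty α with hb
  have hb1 : b < 1 := by
    rw [hb, Finset.sup'_lt_iff]
    exact fun j _ => (hav j (hne j (Classical.arbitrary X)).choose).2.1
  letI : Fintype (Σ j, I j) := inferInstance
  let e : (Σ j, I j) ≃ Fin (Fintype.card (Σ j, I j)) := Fintype.equivFin _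
  refine ⟨Fin (Fintype.card (Σ j, I j)), inferInstance,
    fun k => Ts (e.symm k).1 (e.symm k).2,
    fun x => {k | (e.symm k).2 ∈ φ (e.symm k).1 x}, ?_, ?_, ?_, ?_⟩
  · intro k
    exact averaged_mono (Finset.le_sup' α (Finset.mem_univ (e.symm k).1)) hb1
      (hav (e.symm k).1 (e.symm k).2)
  · intro x k xn hx hmem
    exact hosc (e.symm k).1 x (e.symm k).2 xn hx hmem
  · intro x
    obtain ⟨i, hi⟩ := hne (Classical.arbitrary J) x
    refine ⟨e ⟨_, i⟩, ?_⟩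
    show (e.symm (e ⟨_, i⟩)).2 ∈ φ (e.symm (e ⟨_, i⟩)).1 x
    rw [e.symm_apply_apply]
    exact hi
  · intro x
    ext y
    simp only [Set.mem_iUnion, Set.mem_setOf_eq]
    constructor
    · rintro ⟨j, hy⟩
      rw [hT j x] at hy
      obtain ⟨i, hi, rfl⟩ := hy
      have hp : e.symm (e ⟨j, i⟩) = ⟨j, i⟩ := e.symm_apply_apply _
      exact ⟨e ⟨j, i⟩, by rw [hp]; exact hi, by rw [hp]⟩
    · rintro ⟨k, hk, rfl⟩
      exact ⟨(e.symm k).1, by rw [hT (e.symm k).1 x]; exact ⟨(e.symm k).2, hk, rfl⟩⟩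
end

section
/- Let T_j : X ⇉ X be union α_j-averaged nonexpansive operators for j = 1,...,m, and let ω_1,...,ω_m > 0 with Σ_j ω_j = 1. Then the Minkowski convex combination Σ_j ω_j T_j is union α-averaged nonexpansive with α := Σ_j ω_j α_j. -/
open Filter Topology

/-! Write `T_j x = {T_{j,i} x | i ∈ φ_j x}`. The Minkowski combination is then the union operator
indexed by tuples `f ∈ ∏_j φ_j x`, with branches `∑_j ω_j T_{j,f_j}`. A product of osc selectors is
osc, and each branch is `(∑_j ω_j α_j)`-averaged: `S` is `α`-averaged iff `S = (1 - α) Id + α R`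
with `R` nonexpansive, and the triangle inequality passes this form through convex combinations. -/

section Averaged

variable {X : Type*} [NormedAddCommGroup X] [InnerProductSpace ℝ X]

/-- Multiplying the left inequality by `α` and expanding both squares gives
`‖v - (1 - α) • u‖² ≤ (α‖u‖)²`. -/
lemma norm_sq_add_mul_norm_sub_sq_le_iff {α : ℝ} (hα : 0 < α) (u v : X) :
    ‖v‖ ^ 2 + (1 - α) / α * ‖u - v‖ ^ 2 ≤ ‖u‖ ^ 2 ↔ ‖v - (1 - α) • u‖ ≤ α * ‖u‖ := by
  have hexpand : ‖v - (1 - α) • u‖ ^ 2 - (α * ‖u‖) ^ 2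
      = α * (‖v‖ ^ 2 + (1 - α) / α * ‖u - v‖ ^ 2 - ‖u‖ ^ 2) := by
    rw [norm_sub_sq_real, norm_sub_sq_real, norm_smul, real_inner_smul_right, real_inner_comm,
      Real.norm_eq_abs, mul_pow, sq_abs]
    field_simp
    ring
  rw [← pow_le_pow_iff_left₀ (norm_nonneg _) (by positivity) two_ne_zero,
    ← sub_nonpos (a := ‖v - _‖ ^ 2), hexpand, ← mul_zero α,
    mul_le_mul_iff_right₀ hα, sub_nonpos]

lemma averaged_iff_norm_sub_smul_le {α : ℝ} {S : X → X} :
    Averaged α S ↔ 0 < α ∧ α < 1 ∧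
      ∀ x y, ‖S x - S y - (1 - α) • (x - y)‖ ≤ α * ‖x - y‖ := by
  refine and_congr_right fun hα => and_congr_right fun _ => forall₂_congr fun x y => ?_
  rw [show x - S x - (y - S y) = x - y - (S x - S y) by abel]
  exact norm_sq_add_mul_norm_sub_sq_le_iff hα _ _

lemma Averaged.sum_smul {ι : Type*} [Fintype ι] {α ω : ι → ℝ} {S : ι → X → X}
    (hS : ∀ i, Averaged (α i) (S i)) (hω : ∀ i, 0 < ω i) (hsum : ∑ i, ω i = 1) :
    Averaged (∑ i, ω i * α i) (fun x => ∑ i, ω i • S i x) := by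
  simp only [averaged_iff_norm_sub_smul_le] at hS ⊢
  have hne : (Finset.univ : Finset ι).Nonempty :=
    Finset.nonempty_of_sum_ne_zero (hsum ▸ one_ne_zero)
  refine ⟨Finset.sum_pos (fun i _ => mul_pos (hω i) (hS i).1) hne, ?_, fun x y => ?_⟩
  · calc ∑ i, ω i * α i < ∑ i, ω i * 1 :=
          Finset.sum_lt_sum_of_nonempty hne fun i _ => mul_lt_mul_of_pos_left (hS i).2.1 (hω i)
      _ = 1 := by simpa using hsum
  have hdecomp : ∑ i, ω i • S i x - ∑ i, ω i • S i y - (1 - ∑ i, ω i * α i) • (x - y)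
      = ∑ i, ω i • (S i x - S i y - (1 - α i) • (x - y)) := by
    have hcoef : 1 - ∑ i, ω i * α i = ∑ i, ω i * (1 - α i) := by
      simp [mul_sub, Finset.sum_sub_distrib, hsum]
    simp only [hcoef, Finset.sum_smul, smul_sub, mul_smul, Finset.sum_sub_distrib]
  calc ‖∑ i, ω i • S i x - ∑ i, ω i • S i y - (1 - ∑ i, ω i * α i) • (x - y)‖
      ≤ ∑ i, ‖ω i • (S i x - S i y - (1 - α i) • (x - y))‖ := hdecomp ▸ norm_sum_le _ _
    _ ≤ ∑ i, ω i * (α i * ‖x - y‖) := Finset.sum_le_sum fun i _ => by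
        rw [norm_smul, Real.norm_of_nonneg (hω i).le]
        exact mul_le_mul_of_nonneg_left ((hS i).2.2 x y) (hω i).le
    _ = (∑ i, ω i * α i) * ‖x - y‖ := by simp only [Finset.sum_mul, mul_assoc]

end Averaged

lemma OSCIdx.pi {X J : Type*} [TopologicalSpace X] {I : J → Type*} {φ : ∀ j, X → Set (I j)}
    (hφ : ∀ j, OSCIdx (φ j)) : OSCIdx fun x => Set.univ.pi fun j => φ j x :=
  fun x f xn hx hmem j _ => hφ j x (f j) xn hx fun n => hmem n j trivial

/-- `UnionAveraged` asks for an index type in `Type`; any finite index type can be transported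
to `Fin n`. -/
lemma UnionAveraged.of_finite {X : Type*} [NormedAddCommGroup X] [InnerProductSpace ℝ X]
    {α : ℝ} {T : X → Set X} {I : Type*} [Finite I] (Ts : I → X → X) (φ : X → Set I)
    (hTs : ∀ i, Averaged α (Ts i)) (hφ : OSCIdx φ) (hne : ∀ x, (φ x).Nonempty)
    (hT : ∀ x, T x = {y | ∃ i ∈ φ x, y = Ts i x}) : UnionAveraged α T := by
  obtain ⟨n, ⟨e⟩⟩ := Finite.exists_equiv_fin I
  refine ⟨Fin n, inferInstance, fun k => Ts (e.symm k), fun x => e.symm ⁻¹' φ x,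
    fun k => hTs _, fun x k xn hx hmem => hφ x _ xn hx hmem, fun x => ?_, fun x => ?_⟩
  · simpa [← e.image_eq_preimage_symm] using hne x
  · rw [hT x]
    ext y
    exact ⟨fun ⟨i, hi, hy⟩ => ⟨e i, by simpa using hi, by simpa using hy⟩,
      fun ⟨k, hk, hy⟩ => ⟨e.symm k, hk, hy⟩⟩

lemma setOf_sum_smul_mem_eq {X J : Type*} [AddCommMonoid X] [Module ℝ X] [Fintype J]
    {I : J → Type*} (ω : J → ℝ) (Ts : ∀ j, I j → X) (φ : ∀ j, Set (I j)) :
    {y | ∃ s : J → X, (∀ j, s j ∈ {z | ∃ i ∈ φ j, z = Ts j i}) ∧ y = ∑ j, ω j • s j}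
      = {y | ∃ f ∈ Set.univ.pi φ, y = ∑ j, ω j • Ts j (f j)} := by
  ext y
  constructor
  · rintro ⟨s, hs, rfl⟩
    choose f hf hfs using hs
    exact ⟨f, fun j _ => hf j, by simp only [hfs]⟩
  · rintro ⟨f, hf, rfl⟩
    exact ⟨fun j => Ts j (f j), fun j => ⟨f j, hf j trivial, rfl⟩, rfl⟩

theorem stmt_4_general {X J : Type*}
    [NormedAddCommGroup X] [InnerProductSpace ℝ X]
    [Fintype J]
    (α : J → ℝ) (T : J → X → Set X)
    (ω : J → ℝ) (hω : ∀ j, 0 < ω j) (hsum : ∑ j, ω j = 1)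
    (h : ∀ j, UnionAveraged (α j) (T j)) :
    UnionAveraged (∑ j, ω j * α j)
      (fun x => {y | ∃ s : J → X, (∀ j, s j ∈ T j x) ∧ y = ∑ j, ω j • s j}) := by
  choose I hI Ts φ hTs hφ hne hT using h
  exact UnionAveraged.of_finite (I := ∀ j, I j) (fun f x => ∑ j, ω j • Ts j (f j) x)
    (fun x => Set.univ.pi fun j => φ j x)
    (fun f => Averaged.sum_smul (fun j => hTs j (f j)) hω hsum) (OSCIdx.pi hφ)
    (fun x => Set.univ_pi_nonempty_iff.mpr fun j => hne j x)
    (fun x => by simp only [hT, setOf_sum_smul_mem_eq])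

/-- A Minkowski convex combination `Σ_j ω_j T_j` of union `α_j`-averaged
nonexpansive operators is union `Σ_j ω_j α_j`-averaged nonexpansive. -/
theorem stmt_4 {X J : Type*}
    [NormedAddCommGroup X] [InnerProductSpace ℝ X] [FiniteDimensional ℝ X]
    [Fintype J] [Nonempty J]
    (α : J → ℝ) (T : J → X → Set X)
    (ω : J → ℝ) (hω : ∀ j, 0 < ω j) (hsum : ∑ j, ω j = 1)
    (h : ∀ j, UnionAveraged (α j) (T j)) :
    UnionAveraged (∑ j, ω j * α j)
      (fun x => {y | ∃ s : J → X, (∀ j, s j ∈ T j x) ∧ y = ∑ j, ω j • s j}) :=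
  stmt_4_general α T ω hω hsum h
end

section
/- Let T_j : X ⇉ X be union α_j-averaged nonexpansive for j = 1,...,m. Then the composition T_m ∘ ... ∘ T_1 (with set-valued composition) is union α-averaged nonexpansive with α := (1 + (Σ_j α_j/(1−α_j))^{−1})^{−1}. -/
open Filter Topology

/-- Set-valued composition `T_m ∘ ⋯ ∘ T_1` (apply `T 0` first, then the rest):
`(S ∘ T)(x) = ⋃_{y ∈ T(x)} S(y)`. -/
def compSV {X : Type*} : ∀ {m : ℕ}, (Fin m → (X → Set X)) → X → Set X
  | 0, _, x => {x}
  | _ + 1, T, x => ⋃ y ∈ T 0 x, compSV (fun i => T i.succ) y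

/-!
In the parameter `s = α / (1 - α)` the averagedness inequality reads
`‖S x - S y‖² + ‖(Id - S) x - (Id - S) y‖² / s ≤ ‖x - y‖²`. Chaining the inequalities of `T` and
`S` with `‖u + v‖² / (a + b) ≤ ‖u‖² / a + ‖v‖² / b` shows that `S ∘ T` satisfies it with
parameter `a + b`, so parameters add under composition. For unions, compose the branches pairwise
and select the pair `(i, j)` at `x` when `j ∈ φ_T x` and `i ∈ φ_S (T_j x)`; this selector is outer
semicontinuous because each `T_j` is nonexpansive, hence continuous.
-/
section Union

variable {X : Type*}

/-- `UnionAveraged α` is definitionally `UnionOf (Averaged α)`. -/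
def UnionOf [TopologicalSpace X] (P : (X → X) → Prop) (T : X → Set X) : Prop :=
  ∃ (I : Type) (_ : Fintype I) (Ts : I → X → X) (φ : X → Set I),
    (∀ i, P (Ts i)) ∧ OSCIdx φ ∧ (∀ x, (φ x).Nonempty) ∧
    ∀ x, T x = {y | ∃ i ∈ φ x, y = Ts i x}

theorem UnionOf.mono [TopologicalSpace X] {P Q : (X → X) → Prop} {T : X → Set X}
    (hT : UnionOf P T) (hPQ : ∀ S, P S → Q S) : UnionOf Q T := by
  obtain ⟨I, hI, Ts, φ, hP, hφ⟩ := hT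
  exact ⟨I, hI, Ts, φ, fun i => hPQ _ (hP i), hφ⟩

theorem OSCIdx.comp_continuous [TopologicalSpace X] {I J : Type*} {φ : X → Set I}
    {ψ : X → Set J} {Ts : J → X → X} (hφ : OSCIdx φ) (hψ : OSCIdx ψ)
    (hTs : ∀ j, Continuous (Ts j)) :
    OSCIdx fun x => {p : I × J | p.2 ∈ ψ x ∧ p.1 ∈ φ (Ts p.2 x)} := by
  rintro x ⟨i, j⟩ xn hxn hmem
  exact ⟨hψ x j xn hxn fun n => (hmem n).1,
    hφ _ i _ ((hTs j).continuousAt.tendsto.comp hxn) fun n => (hmem n).2⟩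

theorem UnionOf.comp [TopologicalSpace X] {P Q R : (X → X) → Prop} {S T : X → Set X}
    (hS : UnionOf P S) (hT : UnionOf Q T) (hQ : ∀ T, Q T → Continuous T)
    (hPQR : ∀ S T, P S → Q T → R (S ∘ T)) :
    UnionOf R fun x => ⋃ y ∈ T x, S y := by
  obtain ⟨I, _, Ss, φ, hSs, hφ, hφne, hSeq⟩ := hS
  obtain ⟨J, _, Ts, ψ, hTs, hψ, hψne, hTeq⟩ := hT
  refine ⟨I × J, inferInstance, fun p => Ss p.1 ∘ Ts p.2,
    fun x => {p | p.2 ∈ ψ x ∧ p.1 ∈ φ (Ts p.2 x)}, fun p => hPQR _ _ (hSs p.1) (hTs p.2),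
    hφ.comp_continuous hψ fun j => hQ _ (hTs j), fun x => ?_, fun x => ?_⟩
  · obtain ⟨j, hj⟩ := hψne x
    obtain ⟨i, hi⟩ := hφne (Ts j x)
    exact ⟨(i, j), hj, hi⟩
  · ext z
    simp only [hSeq, hTeq, Set.mem_iUnion, Set.mem_ofPred_eq, Function.comp_apply, Prod.exists,
      exists_prop]
    constructor
    · rintro ⟨_, ⟨j, hj, rfl⟩, i, hi, rfl⟩
      exact ⟨i, j, ⟨hj, hi⟩, rfl⟩
    · rintro ⟨i, j, ⟨hj, hi⟩, rfl⟩
      exact ⟨_, ⟨j, hj, rfl⟩, i, hi, rfl⟩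

theorem compSV_one (T : Fin 1 → X → Set X) : compSV T = T 0 := by
  funext x
  simp [compSV]

end Union

section Ratio

variable {X : Type*} [NormedAddCommGroup X]

/-- `Averaged α S` in the parameter `s = α / (1 - α)`. -/
def AveragedRatio (s : ℝ) (S : X → X) : Prop :=
  0 < s ∧ ∀ x y : X, ‖S x - S y‖ ^ 2 + ‖(x - S x) - (y - S y)‖ ^ 2 / s ≤ ‖x - y‖ ^ 2

theorem Averaged.averagedRatio [InnerProductSpace ℝ X] {α : ℝ} {S : X → X} (h : Averaged α S) :
    AveragedRatio (α / (1 - α)) S := by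
  obtain ⟨hα₀, hα₁, hS⟩ := h
  refine ⟨div_pos hα₀ (sub_pos.2 hα₁), fun x y => ?_⟩
  convert hS x y using 2
  field_simp

theorem AveragedRatio.averaged [InnerProductSpace ℝ X] {s : ℝ} {S : X → X}
    (h : AveragedRatio s S) : Averaged (1 + s⁻¹)⁻¹ S := by
  obtain ⟨hs, hS⟩ := h
  have hpos : 0 < 1 + s⁻¹ := by positivity
  refine ⟨inv_pos.2 hpos, inv_lt_one_of_one_lt₀ (lt_add_of_pos_right 1 (inv_pos.2 hs)),
    fun x y => ?_⟩
  have hcoeff : (1 - (1 + s⁻¹)⁻¹) / (1 + s⁻¹)⁻¹ = s⁻¹ := by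
    field_simp
    ring
  rw [hcoeff, inv_mul_eq_div]
  exact hS x y

theorem AveragedRatio.lipschitzWith {s : ℝ} {S : X → X} (h : AveragedRatio s S) :
    LipschitzWith 1 S := by
  refine LipschitzWith.of_dist_le_mul fun x y => ?_
  have hsq : ‖S x - S y‖ ^ 2 ≤ ‖x - y‖ ^ 2 := by
    have hresid : 0 ≤ ‖(x - S x) - (y - S y)‖ ^ 2 / s := div_nonneg (sq_nonneg _) h.1.le
    linarith [h.2 x y]
  rw [dist_eq_norm, dist_eq_norm, NNReal.coe_one, one_mul]
  exact (sq_le_sq₀ (norm_nonneg _) (norm_nonneg _)).1 hsq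

theorem sq_add_div_add_le {a b p q : ℝ} (ha : 0 < a) (hb : 0 < b) :
    (p + q) ^ 2 / (a + b) ≤ p ^ 2 / a + q ^ 2 / b := by
  rw [div_add_div _ _ ha.ne' hb.ne', div_le_div_iff₀ (add_pos ha hb) (mul_pos ha hb)]
  nlinarith [sq_nonneg (p * b - q * a)]

theorem norm_add_sq_div_add_le {E : Type*} [SeminormedAddCommGroup E] {a b : ℝ} (ha : 0 < a)
    (hb : 0 < b) (u v : E) : ‖u + v‖ ^ 2 / (a + b) ≤ ‖u‖ ^ 2 / a + ‖v‖ ^ 2 / b :=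
  calc ‖u + v‖ ^ 2 / (a + b) ≤ (‖u‖ + ‖v‖) ^ 2 / (a + b) := by
        gcongr
        exact norm_add_le u v
    _ ≤ ‖u‖ ^ 2 / a + ‖v‖ ^ 2 / b := sq_add_div_add_le ha hb

theorem AveragedRatio.comp {a b : ℝ} {S T : X → X} (hS : AveragedRatio a S)
    (hT : AveragedRatio b T) : AveragedRatio (a + b) (S ∘ T) := by
  refine ⟨add_pos hS.1 hT.1, fun x y => ?_⟩
  have hsplit : (x - S (T x)) - (y - S (T y))
      = ((T x - S (T x)) - (T y - S (T y))) + ((x - T x) - (y - T y)) := by abel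
  have hresid := norm_add_sq_div_add_le hS.1 hT.1 ((T x - S (T x)) - (T y - S (T y)))
    ((x - T x) - (y - T y))
  simp only [Function.comp_apply, hsplit]
  linarith [hS.2 (T x) (T y), hT.2 x y]

theorem unionOf_averagedRatio_compSV {n : ℕ} {s : Fin (n + 1) → ℝ}
    {T : Fin (n + 1) → X → Set X} (hT : ∀ j, UnionOf (AveragedRatio (s j)) (T j)) :
    UnionOf (AveragedRatio (∑ j, s j)) (compSV T) := by
  induction n with
  | zero => simpa [compSV_one] using hT 0
  | succ n ih =>
    rw [Fin.sum_univ_succ, add_comm]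
    exact UnionOf.comp (ih fun j => hT j.succ) (hT 0) (fun _ h => h.lipschitzWith.continuous)
      fun _ _ => AveragedRatio.comp

end Ratio

theorem stmt_5_general {X : Type*}
    [NormedAddCommGroup X] [InnerProductSpace ℝ X]
    {m : ℕ} (hm : 0 < m)
    (α : Fin m → ℝ) (T : Fin m → X → Set X)
    (h : ∀ j, UnionAveraged (α j) (T j)) :
    UnionAveraged (1 + (∑ j, α j / (1 - α j))⁻¹)⁻¹ (compSV T) := by
  obtain ⟨n, rfl⟩ := Nat.exists_eq_add_one_of_ne_zero hm.ne'
  have hratio : ∀ j, UnionOf (AveragedRatio (α j / (1 - α j))) (T j) :=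
    fun j => UnionOf.mono (h j) fun _ => Averaged.averagedRatio
  exact (unionOf_averagedRatio_compSV hratio).mono fun _ => AveragedRatio.averaged

/-- The composition of union `α_j`-averaged nonexpansive operators is union
`α`-averaged nonexpansive with `α = (1 + (Σ_j α_j/(1−α_j))⁻¹)⁻¹`. -/
theorem stmt_5 {X : Type*}
    [NormedAddCommGroup X] [InnerProductSpace ℝ X] [FiniteDimensional ℝ X]
    {m : ℕ} (hm : 0 < m)
    (α : Fin m → ℝ) (T : Fin m → X → Set X)
    (h : ∀ j, UnionAveraged (α j) (T j)) :
    UnionAveraged (1 + (∑ j, α j / (1 - α j))⁻¹)⁻¹ (compSV T) :=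
  stmt_5_general hm α T h
end

section
/- Let {T_i}_{i∈I} be a finite collection of nonexpansive operators on a finite-dimensional Hilbert space X with a common fixed point. Let (λ_n) ⊆ (0,1] satisfy liminf λ_n(1−λ_n) > 0, and let (i_n) ⊆ I be admissible (each index appearing infinitely often). Then the sequence defined by x_{n+1} = (1−λ_n)x_n + λ_n T_{i_n}(x_n) converges to a point in ∩_{i∈I} Fix T_i. -/
/-!
Every common fixed point `p` is a Fejér point: `‖x n - p‖` is nonincreasing, and the identity
`‖(1-λ)u + λv‖² = (1-λ)‖u‖² + λ‖v‖² - λ(1-λ)‖u-v‖²` turns the decrease of `‖x n - p‖²` into a bound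
on `λ_n(1-λ_n)‖T_{i_n} x_n - x_n‖²`, so the residuals tend to `0`. By compactness a subsequence
converges to some `y`. If some `T_i` moved `y`, look at the first step after each subsequence index
whose operator moves `y`: up to that step `x` does not get farther from `y`, so these iterates
still converge to `y`, and along those using one fixed such operator `T_j` the vanishing residual
forces `T_j y = y`. Hence `y` is a common fixed point, and Fejér monotonicity with respect to `y`
upgrades subsequential convergence to convergence.
-/

open Filter Topology

/-- `S : X → X` is nonexpansive. -/
def Nonexpansive {X : Type*} [NormedAddCommGroup X] (S : X → X) : Prop :=
  ∀ x y : X, ‖S x - S y‖ ≤ ‖x - y‖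

section General

variable {E : Type*} [NormedAddCommGroup E]

theorem Nonexpansive.lipschitzWith {S : E → E} (hS : Nonexpansive S) : LipschitzWith 1 S :=
  LipschitzWith.of_dist_le_mul fun u v => by simpa [dist_eq_norm] using hS u v

theorem Nonexpansive.continuous {S : E → E} (hS : Nonexpansive S) : Continuous S :=
  hS.lipschitzWith.continuous

theorem eq_of_tendsto_sub_self {ι : Type*} {l : Filter ι} [l.NeBot] {S : E → E}
    (hS : Continuous S) {u : ι → E} {y : E} (hu : Tendsto u l (𝓝 y))
    (hres : Tendsto (fun k => ‖S (u k) - u k‖) l (𝓝 0)) : S y = y := by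
  have hlim : Tendsto (fun k => S (u k) - u k) l (𝓝 (S y - y)) :=
    ((hS.tendsto y).comp hu).sub hu
  rw [← sub_eq_zero]
  exact tendsto_nhds_unique hlim (tendsto_zero_iff_norm_tendsto_zero.2 hres)

theorem tendsto_of_antitone_norm_sub_of_tendsto_subseq {x : ℕ → E} {y : E} {φ : ℕ → ℕ}
    (hx : Antitone fun n => ‖x n - y‖) (hφ : Tendsto φ atTop atTop)
    (hy : Tendsto (x ∘ φ) atTop (𝓝 y)) : Tendsto x atTop (𝓝 y) := by
  rw [tendsto_iff_norm_sub_tendsto_zero] at hy ⊢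
  exact (tendsto_iff_tendsto_subseq_of_antitone hx hφ).2 hy

end General

theorem tendsto_zero_of_mul_le_sub_succ {a b : ℕ → ℝ} {δ : ℝ} (hδ : 0 < δ) (ha : Antitone a)
    (ha_bdd : BddBelow (Set.range a)) (hb : ∀ n, 0 ≤ b n)
    (hab : ∀ᶠ n in atTop, δ * b n ≤ a n - a (n + 1)) : Tendsto b atTop (𝓝 0) := by
  have hdiff : Tendsto (fun n => a n - a (n + 1)) atTop (𝓝 0) := by
    have hlim := tendsto_atTop_ciInf ha ha_bdd
    simpa using hlim.sub (hlim.comp (tendsto_add_atTop_nat 1))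
  refine squeeze_zero' (Eventually.of_forall hb) ?_ (by simpa using hdiff.div_const δ)
  filter_upwards [hab] with n hn
  rw [le_div_iff₀ hδ]
  linarith

section InnerProduct

variable {X : Type*} [NormedAddCommGroup X] [InnerProductSpace ℝ X]

theorem norm_one_sub_smul_add_smul_sq (u v : X) (l : ℝ) :
    ‖(1 - l) • u + l • v‖ ^ 2 = (1 - l) * ‖u‖ ^ 2 + l * ‖v‖ ^ 2 - l * (1 - l) * ‖u - v‖ ^ 2 := by
  rw [norm_add_sq_real, norm_sub_sq_real, real_inner_smul_left, real_inner_smul_right,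
    norm_smul, norm_smul, Real.norm_eq_abs, Real.norm_eq_abs, mul_pow, mul_pow, sq_abs, sq_abs]
  ring

namespace Nonexpansive

variable {S : X → X} {q : X} {l : ℝ}

theorem norm_averaged_sub_sq_le (hS : Nonexpansive S) (hq : S q = q) (hl : 0 ≤ l) (u : X) :
    ‖(1 - l) • u + l • S u - q‖ ^ 2 ≤ ‖u - q‖ ^ 2 - l * (1 - l) * ‖S u - u‖ ^ 2 := by
  have hSu : ‖S u - q‖ ^ 2 ≤ ‖u - q‖ ^ 2 := by
    gcongr
    simpa [hq] using hS u q
  have hsplit : (1 - l) • u + l • S u - q = (1 - l) • (u - q) + l • (S u - q) := by module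
  rw [hsplit, norm_one_sub_smul_add_smul_sq, norm_sub_rev (S u) u, sub_sub_sub_cancel_right]
  nlinarith

theorem norm_averaged_sub_le (hS : Nonexpansive S) (hq : S q = q) (hl : l ∈ Set.Icc 0 1)
    (u : X) : ‖(1 - l) • u + l • S u - q‖ ≤ ‖u - q‖ := by
  have hl' : 0 ≤ l * (1 - l) := mul_nonneg hl.1 (sub_nonneg.2 hl.2)
  refine le_of_sq_le_sq ?_ (norm_nonneg _)
  nlinarith [hS.norm_averaged_sub_sq_le hq hl.1 u, sq_nonneg ‖S u - u‖]

end Nonexpansive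

end InnerProduct

namespace KrasnoselskiiMann

variable {X I : Type*} [NormedAddCommGroup X] [InnerProductSpace ℝ X]
  {T : I → X → X} {lam : ℕ → ℝ} {iseq : ℕ → I} {x : ℕ → X}

theorem norm_succ_sub_le (hT : ∀ i, Nonexpansive (T i)) (hlam : ∀ n, lam n ∈ Set.Icc 0 1)
    (hrec : ∀ n, x (n + 1) = (1 - lam n) • x n + lam n • T (iseq n) (x n)) {q : X} {n : ℕ}
    (hq : T (iseq n) q = q) : ‖x (n + 1) - q‖ ≤ ‖x n - q‖ := by
  rw [hrec n]
  exact (hT _).norm_averaged_sub_le hq (hlam n) _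

theorem antitone_norm_sub (hT : ∀ i, Nonexpansive (T i)) (hlam : ∀ n, lam n ∈ Set.Icc 0 1)
    (hrec : ∀ n, x (n + 1) = (1 - lam n) • x n + lam n • T (iseq n) (x n)) {q : X}
    (hq : ∀ i, T i q = q) : Antitone fun n => ‖x n - q‖ :=
  antitone_nat_of_succ_le fun _ => norm_succ_sub_le hT hlam hrec (hq _)

theorem tendsto_residual (hT : ∀ i, Nonexpansive (T i)) {p : X} (hp : ∀ i, T i p = p)
    (hlam : ∀ n, lam n ∈ Set.Icc 0 1)
    (hliminf : 0 < atTop.liminf fun n => lam n * (1 - lam n))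
    (hrec : ∀ n, x (n + 1) = (1 - lam n) • x n + lam n • T (iseq n) (x n)) :
    Tendsto (fun n => ‖T (iseq n) (x n) - x n‖) atTop (𝓝 0) := by
  set c := atTop.liminf fun n => lam n * (1 - lam n)
  have hc : ∀ᶠ n in atTop, c / 2 < lam n * (1 - lam n) := by
    refine eventually_lt_of_lt_liminf (by linarith) (isBoundedUnder_of ⟨0, fun n => ?_⟩)
    exact mul_nonneg (hlam n).1 (sub_nonneg.2 (hlam n).2)
  have hanti : Antitone fun n => ‖x n - p‖ ^ 2 := fun m n hmn =>
    pow_le_pow_left₀ (norm_nonneg _) (antitone_norm_sub hT hlam hrec hp hmn) 2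
  have hsq : Tendsto (fun n => ‖T (iseq n) (x n) - x n‖ ^ 2) atTop (𝓝 0) := by
    refine tendsto_zero_of_mul_le_sub_succ (half_pos hliminf) hanti
      ⟨0, by rintro _ ⟨n, rfl⟩; positivity⟩ (fun n => by positivity) ?_
    filter_upwards [hc] with n hn
    have hstep := (hT (iseq n)).norm_averaged_sub_sq_le (hp _) (hlam n).1 (x n)
    rw [← hrec n] at hstep
    nlinarith [sq_nonneg ‖T (iseq n) (x n) - x n‖]
  simpa [Real.sqrt_sq (norm_nonneg _)] using hsq.sqrt

theorem norm_sub_le_of_forall_Ico_fixed (hT : ∀ i, Nonexpansive (T i))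
    (hlam : ∀ n, lam n ∈ Set.Icc 0 1)
    (hrec : ∀ n, x (n + 1) = (1 - lam n) • x n + lam n • T (iseq n) (x n)) {q : X} {a b : ℕ}
    (hab : a ≤ b) (hq : ∀ n ∈ Set.Ico a b, T (iseq n) q = q) : ‖x b - q‖ ≤ ‖x a - q‖ := by
  induction b, hab using Nat.le_induction with
  | base => rfl
  | succ b hab ih =>
    calc ‖x (b + 1) - q‖ ≤ ‖x b - q‖ := norm_succ_sub_le hT hlam hrec (hq b ⟨hab, b.lt_succ_self⟩)
      _ ≤ ‖x a - q‖ := ih fun n hn => hq n ⟨hn.1, hn.2.trans b.lt_succ_self⟩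

theorem fixed_of_tendsto_subseq [Finite I] (hT : ∀ i, Nonexpansive (T i))
    (hlam : ∀ n, lam n ∈ Set.Icc 0 1) (hadm : ∀ i, ∃ᶠ n in atTop, iseq n = i)
    (hrec : ∀ n, x (n + 1) = (1 - lam n) • x n + lam n • T (iseq n) (x n))
    (hres : Tendsto (fun n => ‖T (iseq n) (x n) - x n‖) atTop (𝓝 0)) {φ : ℕ → ℕ} {y : X}
    (hφ : Tendsto φ atTop atTop) (hy : Tendsto (x ∘ φ) atTop (𝓝 y)) (i : I) :
    T i y = y := by
  classical
  by_contra hi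
  have hbad (k : ℕ) : ∃ m, φ k ≤ m ∧ T (iseq m) y ≠ y := by
    obtain ⟨m, hm, hkm⟩ := ((hadm i).and_eventually (eventually_ge_atTop (φ k))).exists
    exact ⟨m, hkm, hm ▸ hi⟩
  set m : ℕ → ℕ := fun k => Nat.find (hbad k)
  have hm_ge (k : ℕ) : φ k ≤ m k := (Nat.find_spec (hbad k)).1
  have hm_bad (k : ℕ) : T (iseq (m k)) y ≠ y := (Nat.find_spec (hbad k)).2
  have hxm : Tendsto (x ∘ m) atTop (𝓝 y) := by
    rw [tendsto_iff_norm_sub_tendsto_zero] at hy ⊢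
    refine squeeze_zero (fun _ => norm_nonneg _) (fun k => ?_) hy
    refine norm_sub_le_of_forall_Ico_fixed hT hlam hrec (hm_ge k) fun n hn => ?_
    by_contra hn'
    exact Nat.find_min (hbad k) hn.2 ⟨hn.1, hn'⟩
  obtain ⟨j, hj⟩ : ∃ j, ∃ᶠ k in atTop, iseq (m k) = j :=
    frequently_exists.1 (Frequently.of_forall fun k => ⟨_, rfl⟩)
  obtain ⟨ψ, hψ, hψj⟩ := extraction_of_frequently_atTop hj
  have hres' : Tendsto (fun k => ‖T j (x (m (ψ k))) - x (m (ψ k))‖) atTop (𝓝 0) := by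
    have hmψ := (tendsto_atTop_mono hm_ge hφ).comp hψ.tendsto_atTop
    simpa only [Function.comp_def, hψj] using hres.comp hmψ
  apply hm_bad (ψ 0)
  rw [hψj 0]
  exact eq_of_tendsto_sub_self (hT j).continuous (hxm.comp hψ.tendsto_atTop) hres'

end KrasnoselskiiMann

theorem stmt_9_general {X I : Type*}
    [NormedAddCommGroup X] [InnerProductSpace ℝ X] [FiniteDimensional ℝ X]
    [Fintype I]
    (T : I → X → X) (hT : ∀ i, Nonexpansive (T i))
    (hcommon : ∃ p : X, ∀ i, T i p = p)
    (lam : ℕ → ℝ) (hlam : ∀ n, lam n ∈ Set.Ioc (0 : ℝ) 1)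
    (hliminf : 0 < Filter.atTop.liminf fun n => lam n * (1 - lam n))
    (iseq : ℕ → I) (hadm : ∀ i, ∃ᶠ n in atTop, iseq n = i)
    (x : ℕ → X)
    (hrec : ∀ n, x (n + 1) = (1 - lam n) • x n + lam n • T (iseq n) (x n)) :
    ∃ xb : X, (∀ i, T i xb = xb) ∧ Tendsto x atTop (nhds xb) := by
  obtain ⟨p, hp⟩ := hcommon
  have hlam' (n : ℕ) : lam n ∈ Set.Icc 0 1 := Set.Ioc_subset_Icc_self (hlam n)
  have hres := KrasnoselskiiMann.tendsto_residual hT hp hlam' hliminf hrec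
  have hbdd (n : ℕ) : x n ∈ Metric.closedBall p ‖x 0 - p‖ := by
    rw [Metric.mem_closedBall, dist_eq_norm]
    exact KrasnoselskiiMann.antitone_norm_sub hT hlam' hrec hp n.zero_le
  obtain ⟨y, -, φ, hφ, hy⟩ := tendsto_subseq_of_bounded Metric.isBounded_closedBall hbdd
  have hfix := KrasnoselskiiMann.fixed_of_tendsto_subseq hT hlam' hadm hrec hres
    hφ.tendsto_atTop hy
  exact ⟨y, hfix, tendsto_of_antitone_norm_sub_of_tendsto_subseq
    (KrasnoselskiiMann.antitone_norm_sub hT hlam' hrec hfix) hφ.tendsto_atTop hy⟩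

/-- Krasnosel'skiĭ–Mann iterations with admissible control: if `{T_i}_{i∈I}` is
a finite family of nonexpansive operators with a common fixed point,
`(λ_n) ⊆ (0,1]` with `liminf λ_n(1−λ_n) > 0` and every index appears infinitely
often in `(i_n)`, then `x_{n+1} = (1−λ_n)x_n + λ_n T_{i_n}(x_n)` converges to a
common fixed point of the `T_i`. -/
theorem stmt_9 {X I : Type*}
    [NormedAddCommGroup X] [InnerProductSpace ℝ X] [FiniteDimensional ℝ X]
    [Fintype I] [Nonempty I]
    (T : I → X → X) (hT : ∀ i, Nonexpansive (T i))
    (hcommon : ∃ p : X, ∀ i, T i p = p)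
    (lam : ℕ → ℝ) (hlam : ∀ n, lam n ∈ Set.Ioc (0 : ℝ) 1)
    (hliminf : 0 < Filter.atTop.liminf fun n => lam n * (1 - lam n))
    (iseq : ℕ → I) (hadm : ∀ i, ∃ᶠ n in atTop, iseq n = i)
    (x : ℕ → X)
    (hrec : ∀ n, x (n + 1) = (1 - lam n) • x n + lam n • T (iseq n) (x n)) :
    ∃ xb : X, (∀ i, T i xb = xb) ∧ Tendsto x atTop (nhds xb) :=
  stmt_9_general T hT hcommon lam hlam hliminf iseq hadm x hrec
end

section
/- Let T : X ⇉ X be union nonexpansive with representation T(x) = {T_i(x) : i ∈ φ(x)}, and let x* be a strong fixed point (T(x*) = {x*}). Let r := r(x*;T) be the radius of attraction. Then r > 0 and for all x in the open ball of radius r around x* and all y ∈ T(x), ‖y − x*‖ ≤ ‖x − x*‖. Furthermore, for λ ∈ (0,1] and y ∈ (1−λ)x + λT(x), it holds ‖y−x*‖² + ((1−λ)/λ)‖x−y‖² ≤ ‖x−x*‖². -/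
open Filter Topology ENNReal

/-- The radius of attraction `r(x*;T) = sup{δ > 0 : φ(x) ⊆ φ(x*) ∀ x ∈ B(x*;δ)}`,
as an element of `(0,+∞]` (modeled in `ℝ≥0∞`, with the closed ball described by
`edist x x* ≤ δ`). -/
noncomputable def attractRadius {X I : Type*} [PseudoEMetricSpace X]
    (φ : X → Set I) (xs : X) : ℝ≥0∞ :=
  sSup {δ : ℝ≥0∞ | 0 < δ ∧ ∀ x : X, edist x xs ≤ δ → φ x ⊆ φ xs}

/- The set `{x | φ x ⊆ φ x*}` is open: outer semicontinuity makes each `{x | i ∈ φ x}` closed,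
and with finitely many indices the set is a finite intersection of open sets. Hence `r > 0`.
Within distance `r` of `x*`, every index active at `x` is active at `x*`, so the corresponding
`Tᵢ` fixes `x*`, and nonexpansiveness of `Tᵢ` against `x*` gives `‖Tᵢ x - x*‖ ≤ ‖x - x*‖`.
The relaxed inequality then follows from the Hilbert-space identity
`‖(1-λ)a + λb‖² = (1-λ)‖a‖² + λ‖b‖² - λ(1-λ)‖a-b‖²`. -/

theorem OSCIdx.isClosed_setOf_mem {X I : Type*} [TopologicalSpace X] [SequentialSpace X]
    {φ : X → Set I} (hφ : OSCIdx φ) (i : I) : IsClosed {x | i ∈ φ x} :=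
  IsSeqClosed.isClosed fun _ _ hmem hlim => hφ _ i _ hlim hmem

theorem OSCIdx.isOpen_setOf_subset {X I : Type*} [TopologicalSpace X] [SequentialSpace X]
    [Finite I] {φ : X → Set I} (hφ : OSCIdx φ) (s : Set I) : IsOpen {x | φ x ⊆ s} := by
  have hinter : {x | φ x ⊆ s} = ⋂ i ∈ sᶜ, {x | i ∈ φ x}ᶜ := by
    ext x
    simp only [Set.mem_ofPred_eq, Set.mem_iInter, Set.mem_compl_iff]
    exact ⟨fun h i hi hx => hi (h hx), fun h i hx => by_contra fun hi => h i hi hx⟩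
  rw [hinter]
  exact sᶜ.toFinite.isOpen_biInter fun i _ => (hφ.isClosed_setOf_mem i).isOpen_compl

theorem attractRadius_pos {X I : Type*} [PseudoEMetricSpace X] [Finite I] {φ : X → Set I}
    (hφ : OSCIdx φ) (xs : X) : 0 < attractRadius φ xs := by
  have hnhds : {x | φ x ⊆ φ xs} ∈ 𝓝 xs :=
    (hφ.isOpen_setOf_subset (φ xs)).mem_nhds (le_refl (φ xs))
  obtain ⟨δ, hδ, hball⟩ := Metric.nhds_basis_closedEBall.mem_iff.mp hnhds
  exact hδ.trans_le (le_sSup ⟨hδ, fun x hx => hball hx⟩)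

theorem subset_of_edist_lt_attractRadius {X I : Type*} [PseudoEMetricSpace X] {φ : X → Set I}
    {xs x : X} (hx : edist x xs < attractRadius φ xs) : φ x ⊆ φ xs := by
  obtain ⟨δ, ⟨-, hδ⟩, hxδ⟩ := lt_sSup_iff.mp hx
  exact hδ x hxδ.le

theorem norm_one_sub_smul_add_smul_sq_s10 {X : Type*} [NormedAddCommGroup X]
    [InnerProductSpace ℝ X] (a b : X) (t : ℝ) :
    ‖(1 - t) • a + t • b‖ ^ 2 = (1 - t) * ‖a‖ ^ 2 + t * ‖b‖ ^ 2 - t * (1 - t) * ‖a - b‖ ^ 2 := by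
  rw [norm_add_sq_real, norm_sub_sq_real, norm_smul, norm_smul, real_inner_smul_left,
    real_inner_smul_right, Real.norm_eq_abs, Real.norm_eq_abs, mul_pow, mul_pow, sq_abs, sq_abs]
  ring

theorem norm_relax_sub_sq_add_le {X : Type*} [NormedAddCommGroup X] [InnerProductSpace ℝ X]
    {x z p : X} (hz : ‖z - p‖ ≤ ‖x - p‖) {lam : ℝ} (hlam : 0 < lam) :
    ‖((1 - lam) • x + lam • z) - p‖ ^ 2 + (1 - lam) / lam * ‖x - ((1 - lam) • x + lam • z)‖ ^ 2
      ≤ ‖x - p‖ ^ 2 := by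
  have hshift : ((1 - lam) • x + lam • z) - p = (1 - lam) • (x - p) + lam • (z - p) := by
    module
  have hstep : x - ((1 - lam) • x + lam • z) = lam • ((x - p) - (z - p)) := by module
  have hsq : ‖z - p‖ ^ 2 ≤ ‖x - p‖ ^ 2 := pow_le_pow_left₀ (norm_nonneg _) hz 2
  rw [hshift, hstep, norm_one_sub_smul_add_smul_sq_s10, norm_smul, mul_pow, Real.norm_eq_abs, sq_abs]
  calc (1 - lam) * ‖x - p‖ ^ 2 + lam * ‖z - p‖ ^ 2 - lam * (1 - lam) * ‖x - p - (z - p)‖ ^ 2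
        + (1 - lam) / lam * (lam ^ 2 * ‖x - p - (z - p)‖ ^ 2)
      = (1 - lam) * ‖x - p‖ ^ 2 + lam * ‖z - p‖ ^ 2 := by field_simp; ring
    _ ≤ ‖x - p‖ ^ 2 := by linarith [mul_le_mul_of_nonneg_left hsq hlam.le]

theorem stmt_10_general {X I : Type*}
    [NormedAddCommGroup X] [InnerProductSpace ℝ X]
    [Fintype I]
    (Ts : I → X → X) (hTs : ∀ i, Nonexpansive (Ts i))
    (φ : X → Set I) (hφ : OSCIdx φ)
    (T : X → Set X) (hT : ∀ x, T x = {y | ∃ i ∈ φ x, y = Ts i x})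
    (xs : X) (hxs : T xs = {xs}) :
    0 < attractRadius φ xs ∧
    (∀ x : X, edist x xs < attractRadius φ xs → ∀ y ∈ T x, ‖y - xs‖ ≤ ‖x - xs‖) ∧
    (∀ lam : ℝ, 0 < lam → lam ≤ 1 →
      ∀ x : X, edist x xs < attractRadius φ xs → ∀ z ∈ T x,
        ‖((1 - lam) • x + lam • z) - xs‖ ^ 2 +
            (1 - lam) / lam * ‖x - ((1 - lam) • x + lam • z)‖ ^ 2
          ≤ ‖x - xs‖ ^ 2) := by
  have hfix : ∀ i ∈ φ xs, Ts i xs = xs := fun i hi => by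
    have hmem : Ts i xs ∈ T xs := by rw [hT]; exact ⟨i, hi, rfl⟩
    rwa [hxs] at hmem
  have hquasi : ∀ x : X, edist x xs < attractRadius φ xs → ∀ y ∈ T x, ‖y - xs‖ ≤ ‖x - xs‖ := by
    intro x hx y hy
    rw [hT] at hy
    obtain ⟨i, hi, rfl⟩ := hy
    simpa only [hfix i (subset_of_edist_lt_attractRadius hx hi)] using hTs i x xs
  exact ⟨attractRadius_pos hφ xs, hquasi, fun lam hlam _ x hx z hz =>
    norm_relax_sub_sq_add_le (hquasi x hx z hz) hlam⟩

/-- Radius of attraction at strong fixed points: if `T` is union nonexpansive with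
`T(x*) = {x*}`, then `r := r(x*;T) > 0`; for all `x` in the open ball of radius `r`
about `x*` and all `y ∈ T(x)`, `‖y−x*‖ ≤ ‖x−x*‖`; and for `λ ∈ (0,1]` and
`y ∈ (1−λ)x + λT(x)` one has `‖y−x*‖² + ((1−λ)/λ)‖x−y‖² ≤ ‖x−x*‖²`. -/
theorem stmt_10 {X I : Type*}
    [NormedAddCommGroup X] [InnerProductSpace ℝ X] [FiniteDimensional ℝ X]
    [Fintype I] [Nonempty I]
    (Ts : I → X → X) (hTs : ∀ i, Nonexpansive (Ts i))
    (φ : X → Set I) (hφ : OSCIdx φ) (hne : ∀ x, (φ x).Nonempty)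
    (T : X → Set X) (hT : ∀ x, T x = {y | ∃ i ∈ φ x, y = Ts i x})
    (xs : X) (hxs : T xs = {xs}) :
    0 < attractRadius φ xs ∧
    (∀ x : X, edist x xs < attractRadius φ xs → ∀ y ∈ T x, ‖y - xs‖ ≤ ‖x - xs‖) ∧
    (∀ lam : ℝ, 0 < lam → lam ≤ 1 →
      ∀ x : X, edist x xs < attractRadius φ xs → ∀ z ∈ T x,
        ‖((1 - lam) • x + lam • z) - xs‖ ^ 2 +
            (1 - lam) / lam * ‖x - ((1 - lam) • x + lam • z)‖ ^ 2
          ≤ ‖x - xs‖ ^ 2) :=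
  stmt_10_general Ts hTs φ hφ T hT xs hxs
end

section
/- Let f : X → (−∞,+∞] be proper and γ > 0. Then argmin f ⊆ argmin(^γf) ∩ dom(prox_{γf}) ⊆ {x : prox_{γf}(x) = {x}} ⊆ Fix prox_{γf} ⊆ {x : 0 ∈ ∂_p f(x)}, and if f is in addition lsc and convex, all inclusions hold with equality. -/
/-!
If `x` minimises `f`, then `^γf(x) = f(x)` bounds `^γf` from below and `x` attains its own
envelope. If `x` minimises `^γf` and `p ∈ prox_{γf}(x)`, then
`f(p) + ‖x - p‖²/(2γ) = ^γf(x) ≤ ^γf(p) ≤ f(p)`, which forces `p = x`. A fixed point of the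
prox satisfies `f(x) ≤ f(y) + ‖y - x‖²/(2γ)` for every `y`, the defining inequality of
`0 ∈ ∂_p f(x)`. For convex `f`, evaluating such a local inequality at `x + t(y - x)` gives
`f(x) ≤ f(y) + t c ‖y - x‖²` for small `t > 0`, and letting `t → 0` closes the cycle.
-/

open Filter Topology RealInnerProductSpace

/-- `f : X → (−∞,+∞]` is proper: it never takes the value `−∞` and is somewhere
finite.  (We model `(−∞,+∞]`-valued functions as `EReal`-valued functions.) -/
def ProperFn {X : Type*} (f : X → EReal) : Prop :=
  (∃ x, f x ≠ ⊤) ∧ ∀ x, f x ≠ ⊥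

/-- The Moreau envelope `^γf(x) = inf_y (f(y) + (1/(2γ))‖x−y‖²)`. -/
noncomputable def moreau {X : Type*} [NormedAddCommGroup X]
    (γ : ℝ) (f : X → EReal) (x : X) : EReal :=
  ⨅ y : X, f y + ((1 / (2 * γ) * ‖x - y‖ ^ 2 : ℝ) : EReal)

/-- The proximal subdifferential `∂_p f(x)`. -/
def psubdiff {X : Type*} [NormedAddCommGroup X] [InnerProductSpace ℝ X]
    (f : X → EReal) (x : X) : Set X :=
  {v | ∃ γ > (0 : ℝ), ∃ δ > (0 : ℝ), ∀ y ∈ Metric.closedBall x δ,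
    ((⟪v, y - x⟫ : ℝ) : EReal) ≤ f y - f x + ((1 / (2 * γ) * ‖y - x‖ ^ 2 : ℝ) : EReal)}

/-- The proximity operator: points attaining the infimum in the Moreau envelope,
`prox_{γf}(x) = {p : f(p) + (1/(2γ))‖x−p‖² = ^γf(x)}`. -/
noncomputable def proxSet {X : Type*} [NormedAddCommGroup X]
    (γ : ℝ) (f : X → EReal) (x : X) : Set X :=
  {p | f p + ((1 / (2 * γ) * ‖x - p‖ ^ 2 : ℝ) : EReal) = moreau γ f x}

/-- Convexity of an `EReal`-valued function. -/
def ERealConvexFn {X : Type*} [AddCommGroup X] [Module ℝ X] (f : X → EReal) : Prop :=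
  ∀ x y : X, ∀ t : ℝ, 0 < t → t < 1 →
    f (t • x + (1 - t) • y) ≤ (t : EReal) * f x + ((1 - t : ℝ) : EReal) * f y

theorem EReal.zero_le_sub_coe_add_coe_iff (a r : ℝ) (b : EReal) :
    (0 : EReal) ≤ b - a + r ↔ (a : EReal) ≤ b + r := by
  induction b with
  | bot => simp
  | top => simp
  | coe b => norm_cast; constructor <;> intro h <;> linarith

section Moreau

variable {X : Type*} [NormedAddCommGroup X] {γ : ℝ} {f : X → EReal}

theorem moreau_le (x y : X) :
    moreau γ f x ≤ f y + ((1 / (2 * γ) * ‖x - y‖ ^ 2 : ℝ) : EReal) :=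
  iInf_le _ y

theorem moreau_le_self (x : X) : moreau γ f x ≤ f x := by
  simpa using moreau_le (γ := γ) (f := f) x x

theorem moreau_ne_top (hf : ∃ y, f y ≠ ⊤) (x : X) : moreau γ f x ≠ ⊤ := by
  obtain ⟨y, hy⟩ := hf
  exact ((moreau_le x y).trans_lt (EReal.add_lt_top hy (EReal.coe_ne_top _))).ne

theorem le_moreau_of_forall_le (hγ : 0 ≤ γ) {a : EReal} (h : ∀ z, a ≤ f z) (x : X) :
    a ≤ moreau γ f x :=
  le_iInf fun z => (h z).trans (le_add_of_nonneg_right (by exact_mod_cast by positivity))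

theorem moreau_eq_self_of_forall_le (hγ : 0 ≤ γ) {x : X} (hx : ∀ y, f x ≤ f y) :
    moreau γ f x = f x :=
  (moreau_le_self x).antisymm (le_moreau_of_forall_le hγ hx x)

theorem mem_proxSet_self_iff {x : X} : x ∈ proxSet γ f x ↔ f x = moreau γ f x := by
  simp [proxSet]

theorem eq_of_mem_proxSet_of_forall_moreau_le (hγ : 0 < γ) (hf : ProperFn f) {x q : X}
    (hmin : ∀ y, moreau γ f x ≤ moreau γ f y) (hq : q ∈ proxSet γ f x) : q = x := by
  have hle : f q + ((1 / (2 * γ) * ‖x - q‖ ^ 2 : ℝ) : EReal) ≤ f q :=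
    hq.le.trans ((hmin q).trans (moreau_le_self q))
  have hq_top : f q ≠ ⊤ := fun h =>
    moreau_ne_top (γ := γ) hf.1 x (by rw [← hq, h, EReal.top_add_coe])
  lift f q to ℝ using ⟨hq_top, hf.2 q⟩ with b
  have hsq : 1 / (2 * γ) * ‖x - q‖ ^ 2 ≤ 0 := by
    have : b + 1 / (2 * γ) * ‖x - q‖ ^ 2 ≤ b := by exact_mod_cast hle
    linarith
  have hnorm : ‖x - q‖ = 0 := by
    have := nonpos_of_mul_nonpos_right hsq (by positivity)
    exact pow_eq_zero_iff two_ne_zero |>.1 (le_antisymm this (by positivity))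
  exact (sub_eq_zero.mp (norm_eq_zero.mp hnorm)).symm

end Moreau

section ProximalSubdifferential

variable {X : Type*} [NormedAddCommGroup X] [InnerProductSpace ℝ X] {f : X → EReal}

theorem ne_top_of_zero_mem_psubdiff {x : X} (h : 0 ∈ psubdiff f x) : f x ≠ ⊤ := by
  obtain ⟨γ, -, δ, hδ, hineq⟩ := h
  intro htop
  simpa [htop] using hineq x (Metric.mem_closedBall_self hδ.le)

theorem zero_mem_psubdiff_iff {x : X} {a : ℝ} (ha : f x = a) :
    0 ∈ psubdiff f x ↔ ∃ γ > (0 : ℝ), ∃ δ > (0 : ℝ), ∀ y ∈ Metric.closedBall x δ,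
      f x ≤ f y + ((1 / (2 * γ) * ‖y - x‖ ^ 2 : ℝ) : EReal) := by
  simp only [psubdiff, Set.mem_ofPred_eq, inner_zero_left, EReal.coe_zero, ha,
    EReal.zero_le_sub_coe_add_coe_iff]

theorem zero_mem_psubdiff_of_mem_proxSet_self {γ : ℝ} (hγ : 0 < γ) (hf : ProperFn f) {x : X}
    (hx : x ∈ proxSet γ f x) : 0 ∈ psubdiff f x := by
  rw [mem_proxSet_self_iff] at hx
  have hx_top : f x ≠ ⊤ := hx ▸ moreau_ne_top hf.1 x
  lift f x to ℝ using ⟨hx_top, hf.2 x⟩ with a ha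
  rw [zero_mem_psubdiff_iff ha.symm]
  refine ⟨γ, hγ, 1, one_pos, fun y _ => ?_⟩
  rw [← ha, hx, norm_sub_rev]
  exact moreau_le x y

theorem ERealConvexFn.forall_le_of_le_add_sq_near (hconv : ERealConvexFn f)
    (hbot : ∀ y, f y ≠ ⊥) {x : X} {a c δ : ℝ} (ha : f x = a) (hδ : 0 < δ)
    (hloc : ∀ y ∈ Metric.closedBall x δ, f x ≤ f y + ((c * ‖y - x‖ ^ 2 : ℝ) : EReal))
    (y : X) : f x ≤ f y := by
  rcases eq_or_ne (f y) ⊤ with htop | htop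
  · simp [htop]
  lift f y to ℝ using ⟨htop, hbot y⟩ with b hb
  rw [ha, EReal.coe_le_coe_iff]
  have hchord : ∀ t : ℝ, 0 < t → t < 1 → t * ‖y - x‖ ≤ δ → a ≤ b + t * (c * ‖y - x‖ ^ 2) := by
    intro t ht0 ht1 htδ
    set z := t • y + (1 - t) • x
    have hzx : ‖z - x‖ = t * ‖y - x‖ := by
      rw [show z - x = t • (y - x) by module, norm_smul, Real.norm_of_nonneg ht0.le]
    have hz : z ∈ Metric.closedBall x δ := by
      rwa [Metric.mem_closedBall, dist_eq_norm, hzx]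
    have hfz : f z ≤ ((t * b + (1 - t) * a : ℝ) : EReal) := by
      simpa [← hb, ha] using hconv y x t ht0 ht1
    have : (a : EReal) ≤ ((t * b + (1 - t) * a : ℝ) : EReal) + ((c * ‖z - x‖ ^ 2 : ℝ) : EReal) :=
      ha ▸ (hloc z hz).trans (add_le_add hfz le_rfl)
    rw [← EReal.coe_add, EReal.coe_le_coe_iff, hzx] at this
    refine le_of_mul_le_mul_left ?_ ht0
    nlinarith
  have hlim : Tendsto (fun t : ℝ => b + t * (c * ‖y - x‖ ^ 2)) (𝓝[>] 0) (𝓝 b) := by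
    simpa using tendsto_nhdsWithin_of_tendsto_nhds
      (((continuous_mul_const (c * ‖y - x‖ ^ 2)).tendsto 0).const_add b)
  have hsmall : ∀ᶠ t : ℝ in 𝓝[>] 0, t * ‖y - x‖ ≤ δ := by
    have : Tendsto (fun t : ℝ => t * ‖y - x‖) (𝓝[>] 0) (𝓝 0) := by
      simpa using tendsto_nhdsWithin_of_tendsto_nhds
        ((continuous_mul_const ‖y - x‖).tendsto 0)
    exact this.eventually_le_const hδ
  refine ge_of_tendsto hlim ?_
  filter_upwards [self_mem_nhdsWithin, Ioo_mem_nhdsGT one_pos, hsmall] with t ht0 ht1 htδ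
  exact hchord t ht0 ht1.2 htδ

theorem ERealConvexFn.forall_le_of_zero_mem_psubdiff (hconv : ERealConvexFn f)
    (hbot : ∀ y, f y ≠ ⊥) {x : X} (h : 0 ∈ psubdiff f x) : ∀ y, f x ≤ f y := by
  lift f x to ℝ using ⟨ne_top_of_zero_mem_psubdiff h, hbot x⟩ with a ha
  obtain ⟨γ, -, δ, hδ, hloc⟩ := (zero_mem_psubdiff_iff ha.symm).1 h
  rw [ha]
  exact hconv.forall_le_of_le_add_sq_near hbot ha.symm hδ hloc

end ProximalSubdifferential

theorem stmt_13_general {X : Type*}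
    [NormedAddCommGroup X] [InnerProductSpace ℝ X]
    (f : X → EReal) (hf : ProperFn f) (γ : ℝ) (hγ : 0 < γ) :
    ({x : X | ∀ y, f x ≤ f y} ⊆
      {x : X | ∀ y, moreau γ f x ≤ moreau γ f y} ∩ {x : X | (proxSet γ f x).Nonempty}) ∧
    ({x : X | ∀ y, moreau γ f x ≤ moreau γ f y} ∩ {x : X | (proxSet γ f x).Nonempty} ⊆
      {x : X | proxSet γ f x = {x}}) ∧
    ({x : X | proxSet γ f x = {x}} ⊆ {x : X | x ∈ proxSet γ f x}) ∧
    ({x : X | x ∈ proxSet γ f x} ⊆ {x : X | (0 : X) ∈ psubdiff f x}) ∧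
    (LowerSemicontinuous f → ERealConvexFn f →
      ({x : X | ∀ y, f x ≤ f y} =
        {x : X | ∀ y, moreau γ f x ≤ moreau γ f y} ∩ {x : X | (proxSet γ f x).Nonempty} ∧
      {x : X | ∀ y, moreau γ f x ≤ moreau γ f y} ∩ {x : X | (proxSet γ f x).Nonempty} =
        {x : X | proxSet γ f x = {x}} ∧
      {x : X | proxSet γ f x = {x}} = {x : X | x ∈ proxSet γ f x} ∧
      {x : X | x ∈ proxSet γ f x} = {x : X | (0 : X) ∈ psubdiff f x})) := by
  have inc1 : {x : X | ∀ y, f x ≤ f y} ⊆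
      {x : X | ∀ y, moreau γ f x ≤ moreau γ f y} ∩ {x : X | (proxSet γ f x).Nonempty} :=
    fun x hx => have hmx := moreau_eq_self_of_forall_le hγ.le hx
      ⟨fun y => hmx.trans_le (le_moreau_of_forall_le hγ.le hx y),
        x, mem_proxSet_self_iff.2 hmx.symm⟩
  have inc2 : {x : X | ∀ y, moreau γ f x ≤ moreau γ f y} ∩
      {x : X | (proxSet γ f x).Nonempty} ⊆ {x : X | proxSet γ f x = {x}} := by
    rintro x ⟨hmin, p, hp⟩
    obtain rfl := eq_of_mem_proxSet_of_forall_moreau_le hγ hf hmin hp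
    exact Set.eq_singleton_iff_unique_mem.2
      ⟨hp, fun q hq => eq_of_mem_proxSet_of_forall_moreau_le hγ hf hmin hq⟩
  have inc3 : {x : X | proxSet γ f x = {x}} ⊆ {x : X | x ∈ proxSet γ f x} :=
    fun _ hx => (Set.eq_singleton_iff_unique_mem.1 hx).1
  have inc4 : {x : X | x ∈ proxSet γ f x} ⊆ {x : X | (0 : X) ∈ psubdiff f x} :=
    fun _ hx => zero_mem_psubdiff_of_mem_proxSet_self hγ hf hx
  refine ⟨inc1, inc2, inc3, inc4, fun _ hconv => ?_⟩
  have inc5 : {x : X | (0 : X) ∈ psubdiff f x} ⊆ {x : X | ∀ y, f x ≤ f y} :=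
    fun _ hx => hconv.forall_le_of_zero_mem_psubdiff hf.2 hx
  exact ⟨inc1.antisymm (inc2.trans inc3 |>.trans inc4 |>.trans inc5),
    inc2.antisymm (inc3.trans inc4 |>.trans inc5 |>.trans inc1),
    inc3.antisymm (inc4.trans inc5 |>.trans inc1 |>.trans inc2),
    inc4.antisymm (inc5.trans inc1 |>.trans inc2 |>.trans inc3)⟩

/-- The inclusions
`argmin f ⊆ argmin ^γf ∩ dom prox_{γf} ⊆ {x : prox_{γf}(x) = {x}} ⊆ Fix prox_{γf}
⊆ {x : 0 ∈ ∂_p f(x)}`, with all equalities when `f` is moreover lsc and convex. -/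
theorem stmt_13 {X : Type*}
    [NormedAddCommGroup X] [InnerProductSpace ℝ X] [FiniteDimensional ℝ X]
    (f : X → EReal) (hf : ProperFn f) (γ : ℝ) (hγ : 0 < γ) :
    ({x : X | ∀ y, f x ≤ f y} ⊆
      {x : X | ∀ y, moreau γ f x ≤ moreau γ f y} ∩ {x : X | (proxSet γ f x).Nonempty}) ∧
    ({x : X | ∀ y, moreau γ f x ≤ moreau γ f y} ∩ {x : X | (proxSet γ f x).Nonempty} ⊆
      {x : X | proxSet γ f x = {x}}) ∧
    ({x : X | proxSet γ f x = {x}} ⊆ {x : X | x ∈ proxSet γ f x}) ∧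
    ({x : X | x ∈ proxSet γ f x} ⊆ {x : X | (0 : X) ∈ psubdiff f x}) ∧
    (LowerSemicontinuous f → ERealConvexFn f →
      ({x : X | ∀ y, f x ≤ f y} =
        {x : X | ∀ y, moreau γ f x ≤ moreau γ f y} ∩ {x : X | (proxSet γ f x).Nonempty} ∧
      {x : X | ∀ y, moreau γ f x ≤ moreau γ f y} ∩ {x : X | (proxSet γ f x).Nonempty} =
        {x : X | proxSet γ f x = {x}} ∧
      {x : X | proxSet γ f x = {x}} = {x : X | x ∈ proxSet γ f x} ∧
      {x : X | x ∈ proxSet γ f x} = {x : X | (0 : X) ∈ psubdiff f x})) :=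
  stmt_13_general f hf γ hγ
end

section
/- Let I be a finite index set, let f_i : X → (−∞,+∞] be proper for each i, let f := min_{i∈I} f_i, and let γ > 0. Then the Moreau envelope satisfies ^γf(x) = min_{i∈I} ^γf_i(x) for all x ∈ X, and prox_{γf}(x) = {p : p ∈ prox_{γf_i}(x) for some i ∈ I with ^γf(x) = ^γf_i(x)}. -/
open Filter Topology RealInnerProductSpace

/-
Adding the real number `(1/(2γ))‖x - y‖²` commutes with infima in `EReal`, so the two
infima (over `y` and over `i`) in `^γ(min_i f_i)(x)` can be swapped. For the prox, a
minimiser `p` of `f + (1/(2γ))‖x - ·‖²` is a minimiser of `f_i + (1/(2γ))‖x - ·‖²` for any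
`i` attaining `min_j f_j(p)` (which exists as `I` is finite), and conversely.
-/

theorem EReal.iInf_add_coe {ι : Type*} (g : ι → EReal) (c : ℝ) :
    (⨅ i, g i) + (c : EReal) = ⨅ i, (g i + (c : EReal)) := by
  have hsub : ∀ a b : EReal, a - (c : EReal) ≤ b ↔ a ≤ b + c := fun _ _ =>
    EReal.sub_le_iff_le_add (.inl (EReal.coe_ne_bot c)) (.inl (EReal.coe_ne_top c))
  refine le_antisymm (le_iInf fun i => add_le_add_left (iInf_le _ i) _) ?_
  rw [← hsub]
  exact le_iInf fun i => (hsub _ _).2 (iInf_le _ i)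

section MoreauMin

variable {X I : Type*} [NormedAddCommGroup X] (f : I → X → EReal) (γ : ℝ)

theorem moreau_iInf (x : X) :
    moreau γ (fun y => ⨅ i, f i y) x = ⨅ i, moreau γ (f i) x := by
  simp only [moreau, EReal.iInf_add_coe]
  exact iInf_comm

theorem mem_proxSet_iInf_iff [Finite I] [Nonempty I] (x p : X) :
    p ∈ proxSet γ (fun y => ⨅ i, f i y) x ↔
      ∃ i, moreau γ (fun y => ⨅ j, f j y) x = moreau γ (f i) x ∧ p ∈ proxSet γ (f i) x := by
  set q : EReal := ((1 / (2 * γ) * ‖x - p‖ ^ 2 : ℝ) : EReal)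
  have hmoreau_le : ∀ i, moreau γ (f i) x ≤ f i p + q := fun i => iInf_le _ p
  simp only [proxSet, Set.mem_ofPred_eq, moreau_iInf f γ x]
  constructor
  · intro hp
    obtain ⟨i, hi⟩ := exists_eq_ciInf_of_finite (f := fun j => f j p)
    have henv : ⨅ j, moreau γ (f j) x = moreau γ (f i) x :=
      le_antisymm (iInf_le _ i) ((hmoreau_le i).trans_eq (by rw [hi]; exact hp))
    exact ⟨i, henv, by rw [← henv, ← hp, hi]⟩
  · rintro ⟨i, henv, hp⟩
    refine le_antisymm ?_ ?_
    · calc (⨅ j, f j p) + q ≤ f i p + q := add_le_add_left (iInf_le _ i) _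
        _ = ⨅ j, moreau γ (f j) x := by rw [hp, henv]
    · rw [← moreau_iInf f γ x]
      exact iInf_le _ p

end MoreauMin

theorem stmt_14_general {X I : Type*}
    [NormedAddCommGroup X]
    [Fintype I] [Nonempty I]
    (f : I → X → EReal) (γ : ℝ) :
    (∀ x : X, moreau γ (fun y => ⨅ i, f i y) x = ⨅ i, moreau γ (f i) x) ∧
    (∀ x : X, proxSet γ (fun y => ⨅ i, f i y) x =
      {p | ∃ i, moreau γ (fun y => ⨅ j, f j y) x = moreau γ (f i) x ∧
        p ∈ proxSet γ (f i) x}) :=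
  ⟨moreau_iInf f γ, fun x => Set.ext (mem_proxSet_iInf_iff f γ x)⟩

/-- For `f = min_i f_i` with each `f_i` proper: `^γf = min_i {}^γf_i` and
`prox_{γf}(x) = {p : p ∈ prox_{γf_i}(x) for some i with ^γf(x) = ^γf_i(x)}`. -/
theorem stmt_14 {X I : Type*}
    [NormedAddCommGroup X] [InnerProductSpace ℝ X] [FiniteDimensional ℝ X]
    [Fintype I] [Nonempty I]
    (f : I → X → EReal) (hf : ∀ i, ProperFn (f i)) (γ : ℝ) (hγ : 0 < γ) :
    (∀ x : X, moreau γ (fun y => ⨅ i, f i y) x = ⨅ i, moreau γ (f i) x) ∧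
    (∀ x : X, proxSet γ (fun y => ⨅ i, f i y) x =
      {p | ∃ i, moreau γ (fun y => ⨅ j, f j y) x = moreau γ (f i) x ∧
        p ∈ proxSet γ (f i) x}) :=
  stmt_14_general f γ
end

section
/- Let A = ∪_{i∈I} A_i where I is finite and each A_i ⊆ X is nonempty, closed, and convex. Then the metric projector onto A satisfies P_A(x) = {P_{A_i}(x) : i ∈ I, d(x,A_i) = d(x,A)} for every x ∈ X, where P_{A_i} is the (single-valued, firmly nonexpansive) projector onto A_i; in particular P_A is union 1/2-averaged nonexpansive with active selector φ(x) := {i : d(x,A_i) = d(x,A)}, which is outer semicontinuous with nonempty values. -/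
open Filter Topology Metric
local notation "⟪" x ", " y "⟫_ℝ" => @inner ℝ _ _ x y

/-- `S : X → X` is `1/2`-averaged (firmly) nonexpansive. -/
def HalfAveraged {X : Type*} [NormedAddCommGroup X] [InnerProductSpace ℝ X]
    (S : X → X) : Prop :=
  ∀ x y : X, ‖S x - S y‖ ^ 2 + ‖(x - S x) - (y - S y)‖ ^ 2 ≤ ‖x - y‖ ^ 2

private lemma infDist_eq_iInf_norm {X : Type*} [NormedAddCommGroup X]
    (x : X) (s : Set X) : infDist x s = ⨅ y : s, ‖x - y‖ := by
  rw [infDist_eq_iInf]; simp_rw [dist_eq_norm]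

/-- The metric projector onto a union `A = ⋃_i A_i` of nonempty closed convex sets:
`P_A(x) = {P_{A_i}(x) : d(x,A_i) = d(x,A)}` where each `P_{A_i}` is the single-valued
firmly nonexpansive projector onto `A_i`; in particular `P_A` is union `1/2`-averaged
nonexpansive, with osc nonempty-valued active selector
`φ(x) = {i : d(x,A_i) = d(x,A)}`. -/
theorem stmt_18 {X I : Type*}
    [NormedAddCommGroup X] [InnerProductSpace ℝ X] [FiniteDimensional ℝ X]
    [Fintype I] [Nonempty I]
    (A : I → Set X)
    (hA : ∀ i, (A i).Nonempty ∧ IsClosed (A i) ∧ Convex ℝ (A i)) :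
    ∃ P : I → X → X,
      (∀ i x, {c | c ∈ A i ∧ ‖x - c‖ = infDist x (A i)} = {P i x}) ∧
      (∀ i, HalfAveraged (P i)) ∧
      (∀ x : X, {c | c ∈ (⋃ i, A i) ∧ ‖x - c‖ = infDist x (⋃ i, A i)} =
        {y | ∃ i, infDist x (A i) = infDist x (⋃ i, A i) ∧ y = P i x}) ∧
      OSCIdx (fun x : X => {i : I | infDist x (A i) = infDist x (⋃ j, A j)}) ∧
      (∀ x : X, {i : I | infDist x (A i) = infDist x (⋃ j, A j)}.Nonempty) := by
  classical
  have hex : ∀ (i : I) (x : X), ∃ v ∈ A i, ‖x - v‖ = infDist x (A i) := by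
    intro i x
    obtain ⟨hne, hcl, hcv⟩ := hA i
    obtain ⟨v, hv, hv2⟩ := exists_norm_eq_iInf_of_complete_convex hne hcl.isComplete hcv x
    exact ⟨v, hv, by rw [hv2, infDist_eq_iInf_norm]⟩
  set P : I → X → X := fun i x => (hex i x).choose with hPdef
  have hPm : ∀ i x, P i x ∈ A i := fun i x => (hex i x).choose_spec.1
  have hPd : ∀ i x, ‖x - P i x‖ = infDist x (A i) := fun i x => (hex i x).choose_spec.2
  -- variational inequality
  have hvar : ∀ i x, ∀ w ∈ A i, ⟪x - P i x, w - P i x⟫_ℝ ≤ 0 := by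
    intro i x w hw
    refine (norm_eq_iInf_iff_real_inner_le_zero (hA i).2.2 (hPm i x)).1 ?_ w hw
    rw [hPd i x, infDist_eq_iInf_norm]
  -- uniqueness
  have huniq : ∀ i x c, c ∈ A i → ‖x - c‖ = infDist x (A i) → c = P i x := by
    intro i x c hc hdc
    have h1 : ⟪x - P i x, c - P i x⟫_ℝ ≤ 0 := hvar i x c hc
    have h2 : ⟪x - c, P i x - c⟫_ℝ ≤ 0 := by
      refine (norm_eq_iInf_iff_real_inner_le_zero (hA i).2.2 hc).1 ?_ (P i x) (hPm i x)
      rw [hdc, infDist_eq_iInf_norm]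
    have key : ‖c - P i x‖ ^ 2 ≤ 0 := by
      have e : ⟪c - P i x, c - P i x⟫_ℝ
          = ⟪x - P i x, c - P i x⟫_ℝ - ⟪x - c, c - P i x⟫_ℝ := by
        rw [← inner_sub_left]
        congr 1
        abel
      have e2 : ⟪x - c, c - P i x⟫_ℝ = - ⟪x - c, P i x - c⟫_ℝ := by
        rw [← inner_neg_right, neg_sub]
      have := real_inner_self_eq_norm_sq (c - P i x)
      nlinarith [h1, h2]
    have : c - P i x = 0 := by
      have := norm_nonneg (c - P i x)
      have hn : ‖c - P i x‖ = 0 := by nlinarith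
      exact norm_eq_zero.1 hn
    exact sub_eq_zero.1 this
  refine ⟨P, ?_, ?_, ?_, ?_, ?_⟩
  · intro i x
    ext c
    simp only [Set.mem_setOf_eq, Set.mem_singleton_iff]
    constructor
    · rintro ⟨hc, hd⟩; exact huniq i x c hc hd
    · rintro rfl; exact ⟨hPm i x, hPd i x⟩
  · intro i x y
    have h1 : ⟪x - P i x, P i y - P i x⟫_ℝ ≤ 0 := hvar i x (P i y) (hPm i y)
    have h2 : ⟪y - P i y, P i x - P i y⟫_ℝ ≤ 0 := hvar i y (P i x) (hPm i x)
    have e : ‖x - y‖ ^ 2 = ‖P i x - P i y‖ ^ 2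
        + 2 * ⟪P i x - P i y, (x - P i x) - (y - P i y)⟫_ℝ
        + ‖(x - P i x) - (y - P i y)‖ ^ 2 := by
      have := norm_add_sq_real (P i x - P i y) ((x - P i x) - (y - P i y))
      have harr : (P i x - P i y) + ((x - P i x) - (y - P i y)) = x - y := by abel
      rw [harr] at this
      linarith
    have e1 : (0:ℝ) ≤ ⟪P i x - P i y, (x - P i x) - (y - P i y)⟫_ℝ := by
      have h1' : ⟪P i x - P i y, x - P i x⟫_ℝ = - ⟪x - P i x, P i y - P i x⟫_ℝ := by
        rw [real_inner_comm, ← inner_neg_right, neg_sub]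
      have h2' : ⟪P i x - P i y, y - P i y⟫_ℝ = ⟪y - P i y, P i x - P i y⟫_ℝ :=
        real_inner_comm _ _
      rw [inner_sub_right, h1', h2']
      linarith
    linarith
  · intro x
    have hsub : ∀ i : I, infDist x (⋃ j, A j) ≤ infDist x (A i) := fun i =>
      infDist_le_infDist_of_subset (Set.subset_iUnion A i) (hA i).1
    ext c
    simp only [Set.mem_setOf_eq, Set.mem_iUnion]
    constructor
    · rintro ⟨⟨i, hci⟩, hd⟩
      have h1 : infDist x (A i) ≤ ‖x - c‖ := by
        rw [← dist_eq_norm]; exact infDist_le_dist_of_mem hci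
      have h2 : infDist x (A i) = infDist x (⋃ j, A j) :=
        le_antisymm (by rw [← hd]; exact h1) (hsub i)
      exact ⟨i, h2, huniq i x c hci (hd.trans h2.symm)⟩
    · rintro ⟨i, hd, rfl⟩
      exact ⟨⟨i, hPm i x⟩, by rw [hPd i x, hd]⟩
  · intro x i xn hxn hmem
    have hci : Tendsto (fun n => infDist (xn n) (A i)) atTop (nhds (infDist x (A i))) :=
      ((continuous_infDist_pt (A i)).continuousAt.tendsto.comp hxn)
    have hcu : Tendsto (fun n => infDist (xn n) (⋃ j, A j)) atTop
        (nhds (infDist x (⋃ j, A j))) :=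
      ((continuous_infDist_pt (⋃ j, A j)).continuousAt.tendsto.comp hxn)
    have : (fun n => infDist (xn n) (A i)) = fun n => infDist (xn n) (⋃ j, A j) :=
      funext fun n => hmem n
    exact tendsto_nhds_unique (this ▸ hci) hcu
  · intro x
    obtain ⟨i₀, -, hmin⟩ := Finset.exists_min_image Finset.univ
      (fun i => infDist x (A i)) ⟨Classical.arbitrary I, Finset.mem_univ _⟩
    refine ⟨i₀, le_antisymm ?_
      (infDist_le_infDist_of_subset (Set.subset_iUnion A i₀) (hA i₀).1)⟩
    have hne : (⋃ j, A j).Nonempty := (hA i₀).1.mono (Set.subset_iUnion A i₀)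
    haveI := hne.to_subtype
    rw [infDist_eq_iInf (x := x) (s := ⋃ j, A j)]
    refine le_ciInf fun y : (⋃ j, A j : Set X) => ?_
    obtain ⟨t, ⟨j, rfl⟩, hy⟩ := y.2
    exact le_trans (hmin j (Finset.mem_univ j)) (infDist_le_dist_of_mem hy)
end
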